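/- The AVP ζ(θ) = (1-ξ)^{⌊θ/M⌋-2}·[1 - ((1-(1-μ)^{1+(θ mod M)})/σ)·ξ] (for θ > 2M) is nonincreasing in θ: if 2M < θ₁ ≤ θ₂ then ζ(θ₂) ≤ ζ(θ₁). -/
import Mathlib


/-- The age-violation probability
`ζ(θ) = (1-ξ)^(⌊θ/M⌋-2)·[1 - ((1-(1-μ)^(1+(θ mod M)))/σ)·ξ]` is nonincreasing in `θ`
over integers `θ > 2M`. -/
theorem avp_antitone (M : ℕ) (hM : 1 ≤ M) (μ P σ ξ : ℝ)
    (hμ0 : 0 < μ) (hμ1 : μ < 1) (hP0 : 0 ≤ P) (hP1 : P < 1)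
    (hσ : σ = 1 - (1 - μ) ^ M) (hξ : ξ = σ * (1 - P))
    (θ₁ θ₂ : ℕ) (hθ₁ : 2 * M < θ₁) (hθ : θ₁ ≤ θ₂) :
    let ζ : ℕ → ℝ := fun θ =>
      (1 - ξ) ^ (θ / M - 2) * (1 - ((1 - (1 - μ) ^ (1 + θ % M)) / σ) * ξ)
    ζ θ₂ ≤ ζ θ₁ := by
  intro ζ
  have hM0 : 0 < M := hM
  have ha0 : (0:ℝ) < 1 - μ := by linarith
  have ha1 : (1:ℝ) - μ < 1 := by linarith
  have haM0 : (0:ℝ) < (1 - μ) ^ M := pow_pos ha0 M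
  have haM1 : (1 - μ) ^ M < 1 := pow_lt_one₀ ha0.le ha1 hM0.ne'
  have hσ0 : 0 < σ := by rw [hσ]; linarith
  have hσ1 : σ < 1 := by rw [hσ]; linarith
  have hξ0 : 0 < ξ := by rw [hξ]; nlinarith
  have hξ1 : ξ < 1 := by rw [hξ]; nlinarith
  have h1ξ0 : (0:ℝ) < 1 - ξ := by linarith
  have step : ∀ θ, 2 * M ≤ θ → ζ (θ + 1) ≤ ζ θ := by
    intro θ hθ'
    have hq2 : 2 ≤ θ / M := (Nat.le_div_iff_mul_le hM0).2 (by omega)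
    have hθeq : M * (θ / M) + θ % M = θ := Nat.div_add_mod θ M
    have hsM : θ % M < M := Nat.mod_lt _ hM0
    set q := θ / M with hq
    set s := θ % M with hs
    by_cases hcase : s + 1 = M
    · -- rollover
      have heq : θ + 1 = M * (q + 1) := by rw [Nat.mul_add, Nat.mul_one]; omega
      have h1 : (θ + 1) % M = 0 := by rw [heq]; exact Nat.mul_mod_right _ _
      have h2 : (θ + 1) / M = q + 1 := by rw [heq]; exact Nat.mul_div_cancel_left _ hM0
      have h1s : 1 + s = M := by omega
      show (1 - ξ) ^ ((θ+1) / M - 2) * (1 - ((1 - (1 - μ) ^ (1 + (θ+1) % M)) / σ) * ξ)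
          ≤ (1 - ξ) ^ (θ / M - 2) * (1 - ((1 - (1 - μ) ^ (1 + θ % M)) / σ) * ξ)
      rw [h1, h2, ← hq, ← hs, h1s]
      have hdiv : (1 - (1 - μ) ^ M) / σ = 1 := by rw [hσ]; exact div_self (by linarith)
      rw [hdiv]
      have hexp : q + 1 - 2 = (q - 2) + 1 := by omega
      rw [hexp, pow_succ]
      have hpow0 : (0:ℝ) ≤ (1 - ξ) ^ (q - 2) * (1 - ξ) :=
        mul_nonneg (pow_nonneg h1ξ0.le _) h1ξ0.le
      have hfac : 1 - ((1 - (1 - μ) ^ (1 + 0)) / σ) * ξ ≤ 1 := by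
        have : 0 ≤ ((1 - (1 - μ) ^ (1 + 0)) / σ) * ξ := by
          apply mul_nonneg _ hξ0.le
          apply div_nonneg _ hσ0.le
          simp; nlinarith
        linarith
      calc (1 - ξ) ^ (q - 2) * (1 - ξ) * (1 - ((1 - (1 - μ) ^ (1 + 0)) / σ) * ξ)
          ≤ (1 - ξ) ^ (q - 2) * (1 - ξ) * 1 := by
            exact mul_le_mul_of_nonneg_left hfac hpow0
        _ = (1 - ξ) ^ (q - 2) * (1 - 1 * ξ) := by ring
    · -- same block
      have heq : θ + 1 = M * q + (s + 1) := by omega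
      have hlt : s + 1 < M := by omega
      have h1 : (θ + 1) % M = s + 1 := by
        rw [heq, Nat.mul_add_mod, Nat.mod_eq_of_lt hlt]
      have h2 : (θ + 1) / M = q := by
        rw [heq, Nat.mul_add_div hM0, Nat.div_eq_of_lt hlt]
        omega
      show (1 - ξ) ^ ((θ+1) / M - 2) * (1 - ((1 - (1 - μ) ^ (1 + (θ+1) % M)) / σ) * ξ)
          ≤ (1 - ξ) ^ (θ / M - 2) * (1 - ((1 - (1 - μ) ^ (1 + θ % M)) / σ) * ξ)
      rw [h1, h2, ← hq, ← hs]
      apply mul_le_mul_of_nonneg_left _ (pow_nonneg h1ξ0.le _)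
      have hkey : (1 - μ) ^ (1 + (s + 1)) ≤ (1 - μ) ^ (1 + s) := by
        apply pow_le_pow_of_le_one ha0.le ha1.le; omega
      have hmono : ((1 - (1 - μ) ^ (1 + s)) / σ) * ξ ≤ ((1 - (1 - μ) ^ (1 + (s + 1))) / σ) * ξ := by
        gcongr
      linarith
  induction θ₂, hθ using Nat.le_induction with
  | base => exact le_refl _
  | succ n hn ih => exact (step n (by omega)).trans ih
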